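/- A connected k-uniform hypergraph H is regular if and only if its signless Laplacian spectral radius equals k·Δ(H), where Δ(H) is the maximum degree. -/
import Mathlib

open Matrix BigOperators Finset

variable {V : Type*} [Fintype V] [DecidableEq V]

/-- Incidence matrix of a hypergraph with vertex set `V` and edge set `E`. -/
def inc (E : Finset (Finset V)) : Matrix V {e // e ∈ E} ℝ :=
  fun v e => if v ∈ (e : Finset V) then 1 else 0

/-- Degree of a vertex: number of edges containing it. -/
def deg (E : Finset (Finset V)) (v : V) : ℕ := (E.filter (fun e => v ∈ e)).card

/-- Signless Laplacian matrix `Q = B·Bᵀ`. -/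
def Qmat (E : Finset (Finset V)) : Matrix V V ℝ := inc E * (inc E)ᵀ

/-- The signless Laplacian spectral radius: the largest eigenvalue. -/
noncomputable def specRad {n : Type*} [Fintype n] (M : Matrix n n ℝ) : ℝ :=
  sSup {μ : ℝ | ∃ x ≠ 0, M *ᵥ x = μ • x}

/-- Connectivity of a hypergraph: every two vertices are joined by a walk. -/
def Conn (E : Finset (Finset V)) : Prop :=
  ∀ u w : V, Relation.ReflTransGen (fun a b => a ≠ b ∧ ∃ e ∈ E, a ∈ e ∧ b ∈ e) u w

lemma Qmat_apply (E : Finset (Finset V)) (u w : V) :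
    Qmat E u w = ∑ e : {e // e ∈ E},
      (if u ∈ (e : Finset V) then (1:ℝ) else 0) * (if w ∈ (e : Finset V) then 1 else 0) := by
  simp [Qmat, Matrix.mul_apply, inc, Matrix.transpose_apply]

lemma Qmat_nonneg (E : Finset (Finset V)) (u w : V) : 0 ≤ Qmat E u w := by
  rw [Qmat_apply]
  exact Finset.sum_nonneg fun e _ => by positivity

lemma Qmat_pos (E : Finset (Finset V)) {u w : V} {e : Finset V} (he : e ∈ E)
    (hu : u ∈ e) (hw : w ∈ e) : (1:ℝ) ≤ Qmat E u w := by
  rw [Qmat_apply]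
  have h := Finset.single_le_sum (f := fun e : {e // e ∈ E} =>
    (if u ∈ (e : Finset V) then (1:ℝ) else 0) * (if w ∈ (e : Finset V) then 1 else 0))
    (fun e _ => by positivity) (Finset.mem_univ (⟨e, he⟩ : {e // e ∈ E}))
  simpa [hu, hw] using h

lemma Qmat_rowsum {k : ℕ} (E : Finset (Finset V)) (hk : ∀ e ∈ E, e.card = k) (u : V) :
    ∑ w, Qmat E u w = (k : ℝ) * (deg E u : ℝ) := by
  simp only [Qmat_apply]
  rw [Finset.sum_comm]
  have h1 : ∀ e : {e // e ∈ E},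
      ∑ w, (if u ∈ (e : Finset V) then (1:ℝ) else 0) * (if w ∈ (e : Finset V) then 1 else 0)
        = if u ∈ (e : Finset V) then (k : ℝ) else 0 := by
    intro e
    rw [← Finset.mul_sum]
    have : ∑ w, (if w ∈ (e : Finset V) then (1:ℝ) else 0) = (k : ℝ) := by
      rw [Finset.sum_ite_mem, Finset.univ_inter, Finset.sum_const, hk e e.2]
      simp
    rw [this]
    split <;> simp
  rw [Finset.sum_congr rfl fun e _ => h1 e]
  rw [← Finset.sum_subtype E (fun e => Iff.rfl) (fun e => if u ∈ e then (k:ℝ) else 0)]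
  rw [← Finset.sum_filter, Finset.sum_const, deg, nsmul_eq_mul, mul_comm]

lemma eig_le {k : ℕ} (E : Finset (Finset V)) [Nonempty V] (hk : ∀ e ∈ E, e.card = k)
    {μ : ℝ} {x : V → ℝ} (hx : x ≠ 0) (hQ : Qmat E *ᵥ x = μ • x) :
    μ ≤ (k : ℝ) * ((Finset.univ.sup' Finset.univ_nonempty (deg E) : ℕ) : ℝ) := by
  set Δ : ℕ := Finset.univ.sup' Finset.univ_nonempty (deg E) with hΔ
  obtain ⟨v, -, hv⟩ := Finset.exists_max_image (Finset.univ : Finset V) (fun w => |x w|)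
    Finset.univ_nonempty
  set M := |x v| with hMdef
  have hM : 0 < M := by
    obtain ⟨w, hw⟩ := Function.ne_iff.mp hx
    exact lt_of_lt_of_le (abs_pos.mpr hw) (hv w (Finset.mem_univ w))
  set y : V → ℝ := if 0 ≤ x v then x else -x with hy
  have hyv : y v = M := by
    rw [hy]; split
    · rw [hMdef, abs_of_nonneg ‹_›]
    · show -x v = M
      rw [hMdef, abs_of_neg (lt_of_not_ge ‹_›)]
  have hyQ : Qmat E *ᵥ y = μ • y := by
    rw [hy]; split
    · exact hQ
    · rw [Matrix.mulVec_neg, hQ, smul_neg]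
  have hyle : ∀ w, y w ≤ M := by
    intro w
    have h1 : |y w| = |x w| := by rw [hy]; split <;> simp
    exact le_trans (le_abs_self _) (h1 ▸ hv w (Finset.mem_univ w))
  have h1 : (Qmat E *ᵥ y) v = μ * M := by
    rw [hyQ, Pi.smul_apply, hyv, smul_eq_mul]
  have h2 : (Qmat E *ᵥ y) v ≤ (k:ℝ) * (deg E v : ℝ) * M := by
    calc (Qmat E *ᵥ y) v = ∑ w, Qmat E v w * y w := rfl
      _ ≤ ∑ w, Qmat E v w * M := Finset.sum_le_sum fun w _ =>
          mul_le_mul_of_nonneg_left (hyle w) (Qmat_nonneg E v w)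
      _ = (∑ w, Qmat E v w) * M := by rw [← Finset.sum_mul]
      _ = (k:ℝ) * (deg E v : ℝ) * M := by rw [Qmat_rowsum E hk]
  have h3 : (k:ℝ) * (deg E v : ℝ) ≤ (k:ℝ) * (Δ : ℝ) :=
    mul_le_mul_of_nonneg_left (Nat.cast_le.mpr (Finset.le_sup' (deg E) (Finset.mem_univ v)))
      (Nat.cast_nonneg k)
  have : μ * M ≤ (k:ℝ) * (Δ : ℝ) * M := by
    rw [← h1]
    exact le_trans h2 (mul_le_mul_of_nonneg_right h3 hM.le)
  exact le_of_mul_le_mul_right this hM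

lemma deg_eq_of_eig {k : ℕ} (E : Finset (Finset V)) [Nonempty V] (hk : ∀ e ∈ E, e.card = k)
    (hconn : Conn E) (hkpos : 0 < k) {x : V → ℝ} (hx : x ≠ 0)
    (hQ : Qmat E *ᵥ x =
      ((k : ℝ) * ((Finset.univ.sup' Finset.univ_nonempty (deg E) : ℕ) : ℝ)) • x) :
    ∀ u : V, deg E u = Finset.univ.sup' Finset.univ_nonempty (deg E) := by
  set Δ : ℕ := Finset.univ.sup' Finset.univ_nonempty (deg E) with hΔ
  obtain ⟨v, -, hv⟩ := Finset.exists_max_image (Finset.univ : Finset V) (fun w => |x w|)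
    Finset.univ_nonempty
  set M := |x v| with hMdef
  have hM : 0 < M := by
    obtain ⟨w, hw⟩ := Function.ne_iff.mp hx
    exact lt_of_lt_of_le (abs_pos.mpr hw) (hv w (Finset.mem_univ w))
  set y : V → ℝ := if 0 ≤ x v then x else -x with hy
  have hyv : y v = M := by
    rw [hy]; split
    · rw [hMdef, abs_of_nonneg ‹_›]
    · show -x v = M
      rw [hMdef, abs_of_neg (lt_of_not_ge ‹_›)]
  have hyQ : Qmat E *ᵥ y = ((k:ℝ) * (Δ:ℝ)) • y := by
    rw [hy]; split
    · exact hQ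
    · rw [Matrix.mulVec_neg, hQ, smul_neg]
  have hyle : ∀ w, y w ≤ M := by
    intro w
    have h1 : |y w| = |x w| := by rw [hy]; split <;> simp
    exact le_trans (le_abs_self _) (h1 ▸ hv w (Finset.mem_univ w))
  have step : ∀ u : V, y u = M → deg E u = Δ ∧ ∀ w, (1:ℝ) ≤ Qmat E u w → y w = M := by
    intro u hu
    have h1 : ∑ w, Qmat E u w * y w = (k:ℝ) * (Δ:ℝ) * M := by
      have : (Qmat E *ᵥ y) u = ((k:ℝ) * (Δ:ℝ)) * M := by
        rw [hyQ, Pi.smul_apply, hu, smul_eq_mul]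
      exact this
    have h2 : ∀ w ∈ Finset.univ, Qmat E u w * y w ≤ Qmat E u w * M :=
      fun w _ => mul_le_mul_of_nonneg_left (hyle w) (Qmat_nonneg E u w)
    have h3 : ∑ w, Qmat E u w * M = (k:ℝ) * (deg E u : ℝ) * M := by
      rw [← Finset.sum_mul, Qmat_rowsum E hk]
    have hdegle : (deg E u : ℝ) ≤ (Δ:ℝ) :=
      Nat.cast_le.mpr (Finset.le_sup' (deg E) (Finset.mem_univ u))
    have h4 : (k:ℝ) * (Δ:ℝ) * M ≤ (k:ℝ) * (deg E u : ℝ) * M := by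
      rw [← h1, ← h3]
      exact Finset.sum_le_sum h2
    have hkpos' : (0:ℝ) < k := Nat.cast_pos.mpr hkpos
    have hdeg : (deg E u : ℝ) = (Δ:ℝ) := by
      refine le_antisymm hdegle ?_
      have h5 := le_of_mul_le_mul_right h4 hM
      exact le_of_mul_le_mul_left h5 hkpos' 
    have hdegN : deg E u = Δ := Nat.cast_inj.mp hdeg
    refine ⟨hdegN, ?_⟩
    have hsum_eq : ∑ w, Qmat E u w * y w = ∑ w, Qmat E u w * M := by
      rw [h1, h3, hdeg]
    have hterm := (Finset.sum_eq_sum_iff_of_le h2).mp hsum_eq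
    intro w hw
    have hne : Qmat E u w ≠ 0 := ne_of_gt (by linarith)
    have := hterm w (Finset.mem_univ w)
    exact (mul_left_cancel₀ hne this.symm).symm
  have hall : ∀ u : V, y u = M := by
    intro u
    induction hconn v u with
    | refl => exact hyv
    | tail _ hbc ih =>
      obtain ⟨hne, e, he, hbe, hce⟩ := hbc
      exact (step _ ih).2 _ (Qmat_pos E he hbe hce)
  exact fun u => (step u (hall u)).1

theorem regular_iff_specRad_eq_k_mul_max_degree (k : ℕ) (E : Finset (Finset V))
    [Nonempty V] (hk : ∀ e ∈ E, e.card = k) (hconn : Conn E) :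
    (∃ r : ℕ, ∀ v : V, deg E v = r) ↔
      specRad (Qmat E) =
        (k : ℝ) * ((Finset.univ.sup' Finset.univ_nonempty (deg E) : ℕ) : ℝ) := by
  constructor
  · rintro ⟨r, hr⟩
    have hΔ : Finset.univ.sup' Finset.univ_nonempty (deg E) = r := by
      apply le_antisymm
      · exact Finset.sup'_le _ _ fun v _ => (hr v).le
      · have v := Classical.arbitrary V
        exact hr v ▸ Finset.le_sup' (deg E) (Finset.mem_univ v)
    rw [specRad]
    apply IsGreatest.csSup_eq
    constructor
    · refine ⟨fun _ => 1, ?_, ?_⟩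
      · intro hcon
        have := congrFun hcon (Classical.arbitrary V)
        simp at this
      · funext u
        have : (Qmat E *ᵥ fun _ => (1:ℝ)) u = ∑ w, Qmat E u w := by
          simp [Matrix.mulVec, dotProduct]
        rw [this, Qmat_rowsum E hk, hr u, hΔ]
        simp
    · rintro μ ⟨x, hx, hQ⟩
      exact eig_le E hk hx hQ
  · intro h
    by_cases hk0 : k = 0
    · refine ⟨0, fun v => ?_⟩
      rw [deg, Finset.card_eq_zero, Finset.filter_eq_empty_iff]
      intro e he hv
      have hc := hk e he
      rw [hk0, Finset.card_eq_zero] at hc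
      rw [hc] at hv
      exact absurd hv (Finset.notMem_empty v)
    by_cases hΔ0 : Finset.univ.sup' Finset.univ_nonempty (deg E) = 0
    · exact ⟨0, fun v => Nat.le_zero.mp (hΔ0 ▸ Finset.le_sup' (deg E) (Finset.mem_univ v))⟩
    have hpos : 0 < (k : ℝ) * ((Finset.univ.sup' Finset.univ_nonempty (deg E) : ℕ) : ℝ) :=
      mul_pos (Nat.cast_pos.mpr (Nat.pos_of_ne_zero hk0))
        (Nat.cast_pos.mpr (Nat.pos_of_ne_zero hΔ0))
    rw [specRad] at h
    set S := {μ : ℝ | ∃ x ≠ 0, Qmat E *ᵥ x = μ • x} with hS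
    have hSne : S.Nonempty := by
      by_contra hcon
      rw [Set.not_nonempty_iff_eq_empty] at hcon
      rw [hcon, Real.sSup_empty] at h
      linarith
    have hSfin : S.Finite := by
      apply Set.Finite.subset (Module.End.finite_hasEigenvalue (Matrix.mulVecLin (Qmat E)))
      rintro μ ⟨x, hx, hQ⟩
      exact Module.End.hasEigenvalue_of_hasEigenvector
        ⟨Module.End.mem_eigenspace_iff.mpr (by rw [Matrix.mulVecLin_apply]; exact hQ), hx⟩
    have hmem : sSup S ∈ S := hSne.csSup_mem hSfin
    rw [h] at hmem
    obtain ⟨x, hx, hQ⟩ := hmem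
    exact ⟨_, deg_eq_of_eig E hk hconn (Nat.pos_of_ne_zero hk0) hx hQ⟩
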